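/- arXiv:2309.07587 — 5 statements merged into one kernel-verified Lean document; each statement's English description precedes it below -/
import Mathlib

section
/- In a simple graph G with no even cycles, any two distinct cycles share at most one vertex. -/
/-!
Suppose distinct cycles `C₁`, `C₂` share vertices `x ≠ y`; then some edge of one of them, say `C₂`,
is not on `C₁`. The arc of `C₂` between `x` and `y` through that edge contains an ear `Q` of `C₁`:
a path meeting `C₁` exactly in its ends `a ≠ b` and using no edge of `C₁`. With the two arcs `P₁`,
`P₂` of `C₁` between `a` and `b`, it forms a theta graph whose three cycles `P₁P₂`, `P₁Q`, `P₂Q`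
have total length `2(|P₁| + |P₂| + |Q|)`, so one of them is even.
-/

namespace SimpleGraph.Walk

variable {V : Type*} {G : SimpleGraph V} {u v : V}

lemma IsPath.start_notMem_support_tail {p : G.Walk u v} (hp : p.IsPath) :
    u ∉ p.support.tail := by
  have := hp.support_nodup
  rw [← p.cons_tail_support, List.nodup_cons] at this
  exact this.1

lemma IsPath.isCycle_append_of_ne {p : G.Walk u v} {q : G.Walk v u} (hp : p.IsPath)
    (hq : q.IsPath) (huv : u ≠ v) (hsupport : ∀ z ∈ p.support, z ∈ q.support → z = u ∨ z = v)
    (hedges : p.edges.Disjoint q.edges) : (p.append q).IsCycle := by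
  rw [isCycle_def, isTrail_def, edges_append, tail_support_append]
  refine ⟨hp.isTrail.edges_nodup.append hq.isTrail.edges_nodup hedges, ?_,
    hp.support_nodup.tail.append hq.support_nodup.tail ?_⟩
  · intro h
    exact not_nil_of_ne huv (nil_append_iff.mp (h ▸ nil_nil)).1
  · intro z hzp hzq
    rcases hsupport z (List.mem_of_mem_tail hzp) (List.mem_of_mem_tail hzq) with rfl | rfl
    · exact hp.start_notMem_support_tail hzp
    · exact hq.start_notMem_support_tail hzq


lemma exists_eq_append_first_mem (S : Set V) :
    ∀ {u v : V} (w : G.Walk u v), v ∈ S → ∃ b ∈ S, ∃ (w₁ : G.Walk u b) (w₂ : G.Walk b v),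
      w = w₁.append w₂ ∧ ∀ z ∈ w₁.support, z ∈ S → z = b
  | _, _, nil, hv => ⟨_, hv, nil, nil, rfl, by simp⟩
  | u, _, cons h w, hv => by
    by_cases hu : u ∈ S
    · exact ⟨u, hu, nil, cons h w, rfl, by simp⟩
    · obtain ⟨b, hb, w₁, w₂, rfl, hw₁⟩ := exists_eq_append_first_mem S w hv
      refine ⟨b, hb, cons h w₁, w₂, rfl, ?_⟩
      intro z hz hzS
      rcases List.mem_cons.mp (support_cons h w₁ ▸ hz) with rfl | hz
      · exact absurd hzS hu
      · exact hw₁ z hz hzS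

lemma edges_notMem_edgeSet_of_support_inter (H : G.Subgraph) {b : V} {w : G.Walk u v}
    (hw : ∀ z ∈ w.support, z ∈ H.verts → z = b) : ∀ e ∈ w.edges, e ∉ H.edgeSet := by
  intro e he heH
  induction e using Sym2.ind with
  | h x y =>
    have hxy : H.Adj x y := heH
    have hx := hw x (w.fst_mem_support_of_mem_edges he) hxy.fst_mem
    have hy := hw y (w.snd_mem_support_of_mem_edges he) hxy.snd_mem
    exact hxy.ne (hx.trans hy.symm)


structure IsEar (H : G.Subgraph) (q : G.Walk u v) : Prop where
  isPath : q.IsPath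
  ne : u ≠ v
  start_mem : u ∈ H.verts
  end_mem : v ∈ H.verts
  support_inter : ∀ z ∈ q.support, z ∈ H.verts → z = u ∨ z = v
  edges_notMem : ∀ e ∈ q.edges, e ∉ H.edgeSet

lemma IsPath.exists_isEar (H : G.Subgraph) :
    ∀ {u v : V} {w : G.Walk u v}, w.IsPath → u ∈ H.verts → v ∈ H.verts →
      (∃ e ∈ w.edges, e ∉ H.edgeSet) → ∃ (a b : V) (q : G.Walk a b), q.IsEar H
  | _, _, .nil, _, _, _, ⟨_, he, _⟩ => by simp at he
  | u, _, cons (v := p) h w, hw, hu, hv, ⟨e, he, heH⟩ => by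
    rw [cons_isPath_iff] at hw
    by_cases hp : p ∈ H.verts
    · by_cases hup : s(u, p) ∈ H.edgeSet
      · rw [edges_cons, List.mem_cons] at he
        obtain rfl | he := he
        · exact absurd hup heH
        · exact hw.1.exists_isEar H hp hv ⟨e, he, heH⟩
      · refine ⟨u, p, cons h .nil, ⟨by simp [h.ne], h.ne, hu, hp, by simp, by simpa using hup⟩⟩
    · obtain ⟨b, hb, w₁, w₂, rfl, hw₁⟩ := exists_eq_append_first_mem H.verts w hv
      have hub : u ≠ b := by
        rintro rfl
        exact hw.2 ((mem_support_append_iff _ _).mpr (Or.inr (start_mem_support w₂)))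
      refine ⟨u, b, cons h w₁, ⟨?_, hub, hu, hb, ?_, ?_⟩⟩
      · exact (cons_isPath_iff _ _).mpr
          ⟨hw.1.of_append_left, fun h' => hw.2 ((mem_support_append_iff _ _).mpr (Or.inl h'))⟩
      · intro z hz hzH
        rcases List.mem_cons.mp (support_cons h w₁ ▸ hz) with rfl | hz
        · exact Or.inl rfl
        · exact Or.inr (hw₁ z hz hzH)
      · intro f hf hfH
        rcases List.mem_cons.mp (edges_cons h w₁ ▸ hf) with rfl | hf
        · exact hp (H.mem_edgeSet.mp hfH).snd_mem
        · exact edges_notMem_edgeSet_of_support_inter H hw₁ f hf hfH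


lemma IsEar.isCycle_append {H : G.Subgraph} {p : G.Walk u v} {q : G.Walk v u}
    (hp : p.IsPath) (hq : q.IsEar H) (hpH : p.toSubgraph ≤ H) : (p.append q).IsCycle :=
  hp.isCycle_append_of_ne hq.isPath hq.ne.symm
    (fun z hzp hzq => (hq.support_inter z hzq (hpH.1 (p.mem_verts_toSubgraph.mpr hzp))).symm)
    (fun e hep heq => hq.edges_notMem e heq
      (Subgraph.edgeSet_mono hpH (p.mem_edges_toSubgraph.mpr hep)))

lemma IsEar.reverse {H : G.Subgraph} {q : G.Walk u v} (hq : q.IsEar H) : q.reverse.IsEar H :=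
  ⟨hq.isPath.reverse, hq.ne.symm, hq.end_mem, hq.start_mem,
    fun z hz hzH => (hq.support_inter z (by simpa using hz) hzH).symm,
    fun e he => hq.edges_notMem e (by simpa using he)⟩

lemma IsCycle.exists_even_of_isEar [DecidableEq V] {c : G.Walk u u} (hc : c.IsCycle) {a b : V}
    {q : G.Walk a b} (hq : q.IsEar c.toSubgraph) :
    ∃ (w : V) (d : G.Walk w w), d.IsCycle ∧ Even d.length := by
  have ha : a ∈ c.support := c.mem_verts_toSubgraph.mp hq.start_mem
  have hb : b ∈ (c.rotate a ha).support :=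
    (mem_support_rotate_iff ..).mpr (c.mem_verts_toSubgraph.mp hq.end_mem)
  set p₁ := (c.rotate a ha).takeUntil b hb
  set p₂ := (c.rotate a ha).dropUntil b hb
  have hspec : p₁.append p₂ = c.rotate a ha := take_spec _ hb
  have hsub : (p₁.append p₂).toSubgraph = c.toSubgraph := by rw [hspec, toSubgraph_rotate]
  rw [toSubgraph_append] at hsub
  have hp₁ : p₁.IsPath := (hc.rotate ha).isPath_takeUntil hb
  have hp₂ : p₂.IsPath :=
    IsCycle.isPath_of_append_right (not_nil_of_ne hq.ne) (hspec ▸ hc.rotate ha)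
  have hd₁ : (p₁.append q.reverse).IsCycle := hq.reverse.isCycle_append hp₁ (hsub ▸ le_sup_left)
  have hd₂ : (p₂.append q).IsCycle := hq.isCycle_append hp₂ (hsub ▸ le_sup_right)
  have hlen : p₁.length + p₂.length = c.length := by
    rw [← length_append, hspec, length_rotate]
  by_contra! hodd
  have h₀ := hodd _ c hc
  have h₁ := hodd _ _ hd₁
  have h₂ := hodd _ _ hd₂
  simp only [length_append, length_reverse, Nat.not_even_iff_odd, Nat.odd_iff] at h₀ h₁ h₂
  omega


lemma IsCycle.exists_even_of_two_common_vertices [DecidableEq V] {c₁ : G.Walk u u}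
    {c₂ : G.Walk v v} (hc₁ : c₁.IsCycle) (hc₂ : c₂.IsCycle) {x y : V} (hxy : x ≠ y)
    (hx₁ : x ∈ c₁.support) (hx₂ : x ∈ c₂.support) (hy₁ : y ∈ c₁.support)
    (hy₂ : y ∈ c₂.support) {e : Sym2 V} (he₁ : e ∉ c₁.edges) (he₂ : e ∈ c₂.edges) :
    ∃ (w : V) (d : G.Walk w w), d.IsCycle ∧ Even d.length := by
  have hc := hc₂.rotate hx₂
  have hy : y ∈ (c₂.rotate x hx₂).support := (mem_support_rotate_iff ..).mpr hy₂
  have hspec := take_spec _ hy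
  have he : e ∈ ((c₂.rotate x hx₂).takeUntil y hy).edges ++
      ((c₂.rotate x hx₂).dropUntil y hy).edges := by
    rw [← edges_append, hspec]
    exact (rotate_edges c₂ x hx₂).mem_iff.mpr he₂
  obtain ⟨s, t, w, hw, hs, ht, hew⟩ : ∃ (s t : V) (w : G.Walk s t),
      w.IsPath ∧ s ∈ c₁.support ∧ t ∈ c₁.support ∧ e ∈ w.edges := by
    rcases List.mem_append.mp he with he | he
    · exact ⟨x, y, _, hc.isPath_takeUntil hy, hx₁, hy₁, he⟩
    · exact ⟨y, x, _, IsCycle.isPath_of_append_right (not_nil_of_ne hxy) (hspec ▸ hc),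
        hy₁, hx₁, he⟩
  obtain ⟨a, b, q, hq⟩ := hw.exists_isEar c₁.toSubgraph (c₁.mem_verts_toSubgraph.mpr hs)
    (c₁.mem_verts_toSubgraph.mpr ht) ⟨e, hew, mt c₁.mem_edges_toSubgraph.mp he₁⟩
  exact hc₁.exists_even_of_isEar hq

end SimpleGraph.Walk

/-- In a simple graph with no even cycles, two distinct cycles (distinct meaning they do
not have the same edge set) share at most one vertex. -/
theorem stmt1 {V : Type*} (G : SimpleGraph V)
    (hnoeven : ∀ (v : V) (c : G.Walk v v), c.IsCycle → ¬ Even c.length)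
    {u v : V} (c₁ : G.Walk u u) (c₂ : G.Walk v v)
    (hc₁ : c₁.IsCycle) (hc₂ : c₂.IsCycle)
    (hne : {e : Sym2 V | e ∈ c₁.edges} ≠ {e : Sym2 V | e ∈ c₂.edges}) :
    ∀ x y : V, x ∈ c₁.support → x ∈ c₂.support →
      y ∈ c₁.support → y ∈ c₂.support → x = y := by
  classical
  intro x y hx₁ hx₂ hy₁ hy₂
  by_contra hxy
  obtain ⟨e, he⟩ : ∃ e, ¬(e ∈ c₁.edges ↔ e ∈ c₂.edges) := by
    by_contra! h
    exact hne (Set.ext h)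
  obtain ⟨w, d, hd, heven⟩ : ∃ (w : V) (d : G.Walk w w), d.IsCycle ∧ Even d.length := by
    by_cases he₁ : e ∈ c₁.edges
    · exact hc₂.exists_even_of_two_common_vertices hc₁ hxy hx₂ hx₁ hy₂ hy₁
        (fun he₂ => he ⟨fun _ => he₂, fun _ => he₁⟩) he₁
    · exact hc₁.exists_even_of_two_common_vertices hc₂ hxy hx₁ hx₂ hy₁ hy₂ he₁
        (by tauto)
  exact hnoeven w d hd heven
end

section
/- Let G be a connected simple graph in which every vertex has degree at least 2, G has no even cycles, and G satisfies the odd-cycle condition. Then every vertex of G lies on at least one cycle. -/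
/-!
Suppose `v` lies on no cycle and let `a ≠ b` be two neighbours of `v`. A longest path starting
with the edge `v a` ends at a vertex `x` all of whose (at least two) neighbours lie on the path,
which closes a cycle through `x` inside the path. That cycle misses `v`, so all its vertices are
reachable from `a` in `G - v`; likewise some cycle is reachable from `b` in `G - v`. The
odd-cycle condition links the two cycles, so `a` and `b` are joined in `G - v`, and together
with the edges `v a`, `v b` this gives a cycle through `v`.
-/

/-- `G` has no even cycles. -/
def SimpleGraph.NoEvenCycles {V : Type*} (G : SimpleGraph V) : Prop :=
  ∀ ⦃v : V⦄ (c : G.Walk v v), c.IsCycle → ¬ Even c.length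

/-- The odd-cycle condition: every two cycles either share a vertex or are joined by an
edge of `G`. -/
def SimpleGraph.OddCycleCondition {V : Type*} (G : SimpleGraph V) : Prop :=
  ∀ ⦃u v : V⦄ (c₁ : G.Walk u u) (c₂ : G.Walk v v), c₁.IsCycle → c₂.IsCycle →
    (∃ x, x ∈ c₁.support ∧ x ∈ c₂.support) ∨
    (∃ x y, x ∈ c₁.support ∧ y ∈ c₂.support ∧ G.Adj x y)

/-- A compact graph: a finite connected simple graph in which every vertex has degree
greater than one, with no even cycles, satisfying the odd-cycle condition. -/
def SimpleGraph.IsCompact {V : Type*} [Fintype V] (G : SimpleGraph V)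
    [DecidableRel G.Adj] : Prop :=
  G.Connected ∧ (∀ v : V, 2 ≤ G.degree v) ∧ G.NoEvenCycles ∧ G.OddCycleCondition

namespace SimpleGraph

variable {V : Type*} {G : SimpleGraph V}

def ReachableAvoiding (G : SimpleGraph V) (v a b : V) : Prop :=
  ∃ p : G.Walk a b, v ∉ p.support

namespace ReachableAvoiding

variable {v a b c : V}

lemma symm (h : G.ReachableAvoiding v a b) : G.ReachableAvoiding v b a := by
  obtain ⟨p, hp⟩ := h
  exact ⟨p.reverse, by rwa [Walk.support_reverse, List.mem_reverse]⟩

lemma trans (hab : G.ReachableAvoiding v a b) (hbc : G.ReachableAvoiding v b c) :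
    G.ReachableAvoiding v a c := by
  obtain ⟨p, hp⟩ := hab
  obtain ⟨q, hq⟩ := hbc
  exact ⟨p.append q, by simp [Walk.mem_support_append_iff, hp, hq]⟩

lemma of_adj (h : G.Adj a b) (ha : a ≠ v) (hb : b ≠ v) : G.ReachableAvoiding v a b :=
  ⟨h.toWalk, by simp [ha.symm, hb.symm]⟩

lemma of_mem_support {x : V} {p : G.Walk a x} (hp : v ∉ p.support) (hb : b ∈ p.support) :
    G.ReachableAvoiding v a b := by
  classical
  exact ⟨p.takeUntil b hb, fun h => hp (p.support_takeUntil_subset_support hb h)⟩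

end ReachableAvoiding

lemma exists_isCycle_mem_support_of_reachableAvoiding {v a b : V} (hva : G.Adj v a)
    (hvb : G.Adj v b) (hab : a ≠ b) (h : G.ReachableAvoiding v b a) :
    ∃ (u : V) (c : G.Walk u u), c.IsCycle ∧ v ∈ c.support := by
  obtain ⟨p, hp⟩ := h
  have hreach : (G.deleteEdges {s(v, a)}).Reachable v a := by
    refine reachable_deleteEdges_iff_exists_walk.mpr ⟨Walk.cons hvb p, ?_⟩
    rw [Walk.edges_cons, List.mem_cons, not_or]
    exact ⟨by simp [hab, hvb.ne], fun he => hp (p.fst_mem_support_of_mem_edges he)⟩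
  obtain ⟨u, c, hc, he⟩ := adj_and_reachable_delete_edges_iff_exists_cycle.mp ⟨hva, hreach⟩
  exact ⟨u, c, hc, c.fst_mem_support_of_mem_edges he⟩

lemma Walk.IsPath.exists_isCycle_of_adj_mem_support {u x y z : V} {p : G.Walk u x}
    (hp : p.IsPath) (hxy : G.Adj x y) (hxz : G.Adj x z) (hyz : y ≠ z)
    (hy : y ∈ p.support) (hz : z ∈ p.support) :
    ∃ c : G.Walk x x, c.IsCycle ∧ c.support ⊆ p.support := by
  classical
  -- only the last edge of a path meets its end, so `x y` or `x z` is not an edge of `p`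
  obtain ⟨w, hxw, hw, hwp⟩ : ∃ w, G.Adj x w ∧ w ∈ p.support ∧ s(x, w) ∉ p.edges := by
    by_cases hye : s(x, y) ∈ p.edges
    · refine ⟨z, hxz, hz, fun hze => hyz ?_⟩
      rw [hp.eq_penultimate_of_mem_edges hye, hp.eq_penultimate_of_mem_edges hze]
    · exact ⟨y, hxy, hy, hye⟩
  refine ⟨Walk.cons hxw (p.dropUntil w hw), ?_, ?_⟩
  · rw [Walk.cons_isCycle_iff]
    exact ⟨hp.dropUntil hw, fun h => hwp (p.edges_dropUntil_subset_edges hw h)⟩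
  · rw [Walk.support_cons, List.cons_subset]
    exact ⟨p.end_mem_support, p.support_dropUntil_subset_support hw⟩

lemma exists_isPath_forall_adj_mem_support [Fintype V] {v a : V} (hav : a ≠ v) :
    ∃ (x : V) (p : G.Walk a x), p.IsPath ∧ v ∉ p.support ∧
      ∀ y, G.Adj x y → y ≠ v → y ∈ p.support := by
  classical
  let S : Set (Σ x, G.Walk a x) := {q | q.2.IsPath ∧ v ∉ q.2.support}
  have hS : (⟨a, Walk.nil⟩ : Σ x, G.Walk a x) ∈ S :=
    ⟨Walk.IsPath.nil, by simpa using hav.symm⟩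
  -- a longest path avoiding `v` cannot be extended
  obtain ⟨⟨x, p⟩, hpS, hmax⟩ :=
    (measure fun q : Σ x, G.Walk a x => Fintype.card V - q.2.length).wf.has_min S ⟨_, hS⟩
  obtain ⟨hp, hvp⟩ : p.IsPath ∧ v ∉ p.support := hpS
  refine ⟨x, p, hp, hvp, fun y hxy hyv => by_contra fun hy => hmax ⟨y, p.concat hxy⟩ ?_ ?_⟩
  · refine ⟨hp.concat hy hxy, ?_⟩
    simp [Walk.support_concat, hvp, hyv.symm]
  · have := (hp.concat hy hxy).length_lt
    change Fintype.card V - (p.concat hxy).length < Fintype.card V - p.length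
    rw [Walk.length_concat] at this ⊢
    omega

lemma exists_isCycle_forall_mem_support_reachableAvoiding [Fintype V] [DecidableRel G.Adj]
    (hdeg : ∀ u, 2 ≤ G.degree u) {v a : V} (hva : G.Adj v a) :
    ∃ (x : V) (c : G.Walk x x), c.IsCycle ∧
      ∀ w ∈ c.support, w = v ∨ G.ReachableAvoiding v a w := by
  obtain ⟨x, q, hq, hvq, hmax⟩ := exists_isPath_forall_adj_mem_support (G := G) hva.ne.symm
  have hp : (Walk.cons hva q).IsPath := hq.cons hvq
  have hnbr : ∀ y, G.Adj x y → y ∈ (Walk.cons hva q).support := fun y hxy => by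
    rw [Walk.support_cons, List.mem_cons]
    exact (em (y = v)).imp id (hmax y hxy)
  obtain ⟨y, hy, z, hz, hyz⟩ := Finset.one_lt_card.mp (hdeg x)
  rw [mem_neighborFinset] at hy hz
  obtain ⟨c, hc, hcp⟩ :=
    hp.exists_isCycle_of_adj_mem_support hy hz hyz (hnbr y hy) (hnbr z hz)
  refine ⟨x, c, hc, fun w hw => ?_⟩
  have hwp := hcp hw
  rw [Walk.support_cons, List.mem_cons] at hwp
  exact hwp.imp_right (ReachableAvoiding.of_mem_support hvq)

end SimpleGraph

open SimpleGraph

/-- Every vertex of a compact graph lies on at least one cycle. -/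
theorem stmt2 {V : Type*} [Fintype V] (G : SimpleGraph V) [DecidableRel G.Adj]
    (hG : G.IsCompact) :
    ∀ v : V, ∃ (u : V) (c : G.Walk u u), c.IsCycle ∧ v ∈ c.support := by
  obtain ⟨-, hdeg, -, hocc⟩ := hG
  intro v
  by_contra! H
  have hne : ∀ {u} {c : G.Walk u u}, c.IsCycle → ∀ w ∈ c.support, w ≠ v :=
    fun hc w hw hwv => H _ _ hc (hwv ▸ hw)
  obtain ⟨a, ha, b, hb, hab⟩ := Finset.one_lt_card.mp (hdeg v)
  rw [mem_neighborFinset] at ha hb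
  obtain ⟨_, c₁, hc₁, h₁⟩ := exists_isCycle_forall_mem_support_reachableAvoiding hdeg ha
  obtain ⟨_, c₂, hc₂, h₂⟩ := exists_isCycle_forall_mem_support_reachableAvoiding hdeg hb
  have hreach₁ : ∀ w ∈ c₁.support, G.ReachableAvoiding v a w :=
    fun w hw => (h₁ w hw).resolve_left (hne hc₁ w hw)
  have hreach₂ : ∀ w ∈ c₂.support, G.ReachableAvoiding v b w :=
    fun w hw => (h₂ w hw).resolve_left (hne hc₂ w hw)
  have hba : G.ReachableAvoiding v b a := by
    rcases hocc c₁ c₂ hc₁ hc₂ with ⟨x, hx₁, hx₂⟩ | ⟨x, y, hx, hy, hxy⟩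
    · exact (hreach₂ x hx₂).trans (hreach₁ x hx₁).symm
    · have hyx : G.ReachableAvoiding v y x := .of_adj hxy.symm (hne hc₂ y hy) (hne hc₁ x hx)
      exact (hreach₂ y hy).trans (hyx.trans (hreach₁ x hx).symm)
  obtain ⟨u, c, hc, hvc⟩ := exists_isCycle_mem_support_of_reachableAvoiding ha hb hab hba
  exact H u c hc hvc
end

section
/- Let G be a compact graph with exactly one vertex u of degree greater than 2. Then G is a union of finitely many odd cycles pairwise intersecting exactly in the common vertex u; that is, every edge of G lies on a cycle through u, all cycles of G pass through u and are odd, and any two distinct cycles meet only in u. -/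
/-!
Since every vertex other than `u` has degree two, the vertex set of a cycle is closed under
adjacency away from `u`. Following a path from `u` to a cycle therefore keeps us on the cycle,
so every cycle contains `u`; and if two cycles share a vertex `x ≠ u`, the two arcs of the first
cycle from `u` to `x` lie on the second, which forces the two cycles to have the same edges.
Finally all degrees are even (handshake lemma), so no edge is a bridge and every edge lies on
a cycle, which passes through `u`.
-/

namespace SimpleGraph

variable {V : Type*} {G : SimpleGraph V}

section Parity

variable [Fintype V] [DecidableRel G.Adj]

lemma even_degree_of_even_degree_reachable {x : V}
    (h : ∀ v, G.Reachable x v → v ≠ x → Even (G.degree v)) : Even (G.degree x) := by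
  classical
  let s : Set V := {v | G.Reachable x v}
  have hdeg : ∀ v : s, (G.induce s).degree v = G.degree v := fun v =>
    degree_induce_of_neighborSet_subset fun w hw => v.2.trans (Adj.reachable hw)
  by_contra hx
  obtain ⟨w, hwx, hw⟩ := (G.induce s).exists_ne_odd_degree_of_exists_odd_degree
    ⟨x, Reachable.refl x⟩ (by rw [hdeg]; exact Nat.not_even_iff_odd.mp hx)
  rw [hdeg] at hw
  exact Nat.not_even_iff_odd.mpr hw (h w w.2 fun hwx' => hwx (Subtype.ext hwx'))

lemma degree_deleteEdges_of_ne {x y v : V} (hx : v ≠ x) (hy : v ≠ y)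
    [DecidableRel (G.deleteEdges {s(x, y)}).Adj] :
    (G.deleteEdges {s(x, y)}).degree v = G.degree v := by
  unfold degree
  congr 1
  ext w
  simp [hx, hy]

lemma degree_deleteEdges_add_one {x y : V} (hxy : G.Adj x y)
    [DecidableRel (G.deleteEdges {s(x, y)}).Adj] :
    (G.deleteEdges {s(x, y)}).degree x + 1 = G.degree x := by
  classical
  have : (G.deleteEdges {s(x, y)}).neighborFinset x = (G.neighborFinset x).erase y := by
    ext w
    simp [hxy.ne, and_comm, eq_comm]
  rw [← card_neighborFinset_eq_degree, ← card_neighborFinset_eq_degree, this,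
    Finset.card_erase_add_one (by simpa using hxy)]

lemma not_isBridge_of_even_degree (h : ∀ v, Even (G.degree v)) {e : Sym2 V}
    (he : e ∈ G.edgeSet) : ¬ G.IsBridge e := by
  classical
  induction e using Sym2.ind with | _ x y =>
  rw [isBridge_iff]
  intro hxy
  have hx : Even ((G.deleteEdges {s(x, y)}).degree x) := by
    refine even_degree_of_even_degree_reachable fun v hv hvx => ?_
    have hvy : v ≠ y := by rintro rfl; exact hxy hv
    rw [degree_deleteEdges_of_ne hvx hvy]
    exact h v
  exact Nat.not_even_iff_odd.mpr (degree_deleteEdges_add_one he ▸ hx.add_one) (h x)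

end Parity

namespace Walk

lemma forall_mem_support_of_adj_closed {S : Set V} {u : V}
    (hS : ∀ v ∈ S, v ≠ u → ∀ w, G.Adj v w → w ∈ S) :
    ∀ {a b : V} (p : G.Walk a b), b ∈ S → u ∉ p.support.tail → ∀ v ∈ p.support, v ∈ S
  | _, _, nil, hb, _, v, hv => by rwa [List.mem_singleton.mp hv]
  | _, _, cons hac q, hb, hu, v, hv => by
    rw [support_cons, List.tail_cons] at hu
    have hq := forall_mem_support_of_adj_closed hS q hb fun h => hu (List.mem_of_mem_tail h)
    rcases List.mem_cons.mp (support_cons hac q ▸ hv) with rfl | hv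
    · exact hS _ (hq _ q.start_mem_support) (fun h => hu (h ▸ q.start_mem_support)) _ hac.symm
    · exact hq v hv

lemma IsPath.forall_mem_support_of_adj_closed {S : Set V} {u b : V} {p : G.Walk u b}
    (hp : p.IsPath) (hS : ∀ v ∈ S, v ≠ u → ∀ w, G.Adj v w → w ∈ S) (hb : b ∈ S) :
    ∀ v ∈ p.support, v ∈ S :=
  p.forall_mem_support_of_adj_closed hS hb
    (List.nodup_cons.mp (p.cons_tail_support ▸ hp.support_nodup)).1

lemma IsCycle.mem_edges_of_degree_eq_two {u x y : V} {c : G.Walk u u} (hc : c.IsCycle)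
    (hx : x ∈ c.support) [Fintype (G.neighborSet x)] (hdeg : G.degree x = 2) (hxy : G.Adj x y) :
    s(x, y) ∈ c.edges := by
  have hsub : c.toSubgraph.neighborSet x ⊆ G.neighborSet x := c.toSubgraph.neighborSet_subset x
  have hcard : (G.neighborSet x).ncard ≤ (c.toSubgraph.neighborSet x).ncard := by
    rw [hc.ncard_neighborSet_toSubgraph_eq_two hx, Set.ncard_eq_toFinset_card',
      ← neighborFinset_def, card_neighborFinset_eq_degree, hdeg]
  have heq := Set.eq_of_subset_of_ncard_le hsub hcard (Set.toFinite _)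
  rw [← adj_toSubgraph_iff_mem_edges]
  exact (heq ▸ hxy : y ∈ c.toSubgraph.neighborSet x)

section DegreeTwo

variable [Fintype V] [DecidableRel G.Adj] {u : V}

lemma IsCycle.mem_support_of_adj (hdeg : ∀ v, v ≠ u → G.degree v = 2) {w : V}
    {c : G.Walk w w} (hc : c.IsCycle) {x y : V} (hx : x ∈ c.support) (hxu : x ≠ u)
    (hxy : G.Adj x y) : y ∈ c.support :=
  c.snd_mem_support_of_mem_edges (hc.mem_edges_of_degree_eq_two hx (hdeg x hxu) hxy)

lemma IsCycle.mem_support_of_forall_degree_eq_two (hconn : G.Connected)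
    (hdeg : ∀ v, v ≠ u → G.degree v = 2) {w : V} {c : G.Walk w w} (hc : c.IsCycle) :
    u ∈ c.support := by
  obtain ⟨p, hp⟩ := hconn.preconnected.exists_isPath u w
  exact hp.forall_mem_support_of_adj_closed (S := {v | v ∈ c.support})
    (fun _ hx hxu _ hxy => hc.mem_support_of_adj hdeg hx hxu hxy) c.start_mem_support
    u p.start_mem_support

lemma IsCycle.support_subset_of_mem_support [DecidableEq V]
    (hdeg : ∀ v, v ≠ u → G.degree v = 2)
    {v w x : V} {c₁ : G.Walk v v} {c₂ : G.Walk w w} (hc₁ : c₁.IsCycle) (hc₂ : c₂.IsCycle)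
    (hu : u ∈ c₁.support) (hx₁ : x ∈ c₁.support) (hx₂ : x ∈ c₂.support) (hxu : x ≠ u) :
    ∀ y ∈ c₁.support, y ∈ c₂.support := by
  -- Rotated to start at `u`, the cycle splits at `x` into two paths from `u` to `x`.
  set d := c₁.rotate u hu
  have hd : d.IsCycle := hc₁.rotate hu
  have hxd : x ∈ d.support := (c₁.mem_support_rotate_iff u hu).mpr hx₁
  have hP : (d.takeUntil x hxd).IsPath := hd.isPath_takeUntil hxd
  have hQ : (d.dropUntil x hxd).IsPath :=
    IsCycle.isPath_of_append_right (not_nil_of_ne hxu.symm) (by rwa [d.take_spec hxd])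
  have hS : ∀ y ∈ {y | y ∈ c₂.support}, y ≠ u → ∀ z, G.Adj y z → z ∈ {y | y ∈ c₂.support} :=
    fun _ hy hyu _ hyz => hc₂.mem_support_of_adj hdeg hy hyu hyz
  intro y hy
  replace hy : y ∈ d.support := (c₁.mem_support_rotate_iff u hu).mpr hy
  rw [← d.take_spec hxd, mem_support_append_iff] at hy
  rcases hy with hy | hy
  · exact hP.forall_mem_support_of_adj_closed hS hx₂ y hy
  · exact hQ.reverse.forall_mem_support_of_adj_closed hS hx₂ y (by simpa using hy)

lemma IsCycle.edges_subset_of_mem_support [DecidableEq V]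
    (hdeg : ∀ v, v ≠ u → G.degree v = 2)
    {v w x : V} {c₁ : G.Walk v v} {c₂ : G.Walk w w} (hc₁ : c₁.IsCycle) (hc₂ : c₂.IsCycle)
    (hu : u ∈ c₁.support) (hx₁ : x ∈ c₁.support) (hx₂ : x ∈ c₂.support) (hxu : x ≠ u) :
    ∀ e ∈ c₁.edges, e ∈ c₂.edges := by
  have hsub := hc₁.support_subset_of_mem_support hdeg hc₂ hu hx₁ hx₂ hxu
  have key : ∀ a b, s(a, b) ∈ c₁.edges → a ≠ u → s(a, b) ∈ c₂.edges := fun a b hab hau =>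
    hc₂.mem_edges_of_degree_eq_two (hsub a (c₁.fst_mem_support_of_mem_edges hab))
      (hdeg a hau) (c₁.adj_of_mem_edges hab)
  intro e he
  induction e using Sym2.ind with | _ a b =>
  by_cases hau : a = u
  · have hbu : b ≠ u := hau ▸ (c₁.adj_of_mem_edges he).ne'
    exact Sym2.eq_swap ▸ key b a (Sym2.eq_swap ▸ he) hbu
  · exact key a b he hau

end DegreeTwo

end Walk

end SimpleGraph

theorem stmt8_general {V : Type*} [Fintype V] (G : SimpleGraph V) [DecidableRel G.Adj]
    (hG : G.IsCompact) {u : V}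
    (huniq : ∀ v : V, 2 < G.degree v → v = u) :
    (∀ e ∈ G.edgeSet, ∃ c : G.Walk u u, c.IsCycle ∧ e ∈ c.edges) ∧
    (∀ ⦃v : V⦄ (c : G.Walk v v), c.IsCycle → u ∈ c.support ∧ Odd c.length) ∧
    (∀ ⦃v w : V⦄ (c₁ : G.Walk v v) (c₂ : G.Walk w w), c₁.IsCycle → c₂.IsCycle →
      {e : Sym2 V | e ∈ c₁.edges} ≠ {e : Sym2 V | e ∈ c₂.edges} →
      ∀ x : V, x ∈ c₁.support → x ∈ c₂.support → x = u) := by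
  classical
  obtain ⟨hconn, hdeg, hnoeven, -⟩ := hG
  have hdeg2 : ∀ v, v ≠ u → G.degree v = 2 := fun v hv =>
    le_antisymm (not_lt.mp fun h => hv (huniq v h)) (hdeg v)
  have hmem : ∀ ⦃v : V⦄ (c : G.Walk v v), c.IsCycle → u ∈ c.support := fun _ _ hc =>
    hc.mem_support_of_forall_degree_eq_two hconn hdeg2
  refine ⟨fun e he => ?_, fun _ c hc => ⟨hmem c hc, Nat.not_even_iff_odd.mp (hnoeven c hc)⟩,
    fun _ _ c₁ c₂ hc₁ hc₂ hne x hx₁ hx₂ => ?_⟩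
  · have heven_ne : ∀ v, v ≠ u → Even (G.degree v) := fun v hv => hdeg2 v hv ▸ even_two
    have heven : ∀ v, Even (G.degree v) := fun v => by
      by_cases hv : v = u
      · exact hv ▸ SimpleGraph.even_degree_of_even_degree_reachable fun w _ hw => heven_ne w hw
      · exact heven_ne v hv
    obtain ⟨v, c, hc, hec⟩ : ∃ v, ∃ c : G.Walk v v, c.IsCycle ∧ e ∈ c.edges := by
      simpa [SimpleGraph.isBridge_iff_forall_cycle_notMem he] using
        SimpleGraph.not_isBridge_of_even_degree heven he
    exact ⟨c.rotate u (hmem c hc), hc.rotate _, (c.rotate_edges u _).mem_iff.mpr hec⟩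
  · by_contra hxu
    exact hne <| Set.ext fun e =>
      ⟨hc₁.edges_subset_of_mem_support hdeg2 hc₂ (hmem c₁ hc₁) hx₁ hx₂ hxu e,
        hc₂.edges_subset_of_mem_support hdeg2 hc₁ (hmem c₂ hc₂) hx₂ hx₁ hxu e⟩

/-- A compact graph with exactly one big vertex `u` is a union of finitely many odd
cycles pairwise meeting exactly in `u`: every edge lies on a cycle through `u`, every
cycle of `G` passes through `u` and is odd, and two distinct cycles meet only in `u`. -/
theorem stmt8 {V : Type*} [Fintype V] (G : SimpleGraph V) [DecidableRel G.Adj]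
    (hG : G.IsCompact) {u : V} (hu : 2 < G.degree u)
    (huniq : ∀ v : V, 2 < G.degree v → v = u) :
    (∀ e ∈ G.edgeSet, ∃ c : G.Walk u u, c.IsCycle ∧ e ∈ c.edges) ∧
    (∀ ⦃v : V⦄ (c : G.Walk v v), c.IsCycle → u ∈ c.support ∧ Odd c.length) ∧
    (∀ ⦃v w : V⦄ (c₁ : G.Walk v v) (c₂ : G.Walk w w), c₁.IsCycle → c₂.IsCycle →
      {e : Sym2 V | e ∈ c₁.edges} ≠ {e : Sym2 V | e ∈ c₂.edges} →
      ∀ x : V, x ∈ c₁.support → x ∈ c₂.support → x = u) :=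
  stmt8_general G hG huniq
end

section
/- Let J_m ⊂ K[e_{i,j}] be the monomial ideal minimally generated by {e_i'' e_j' : 1 ≤ i < j ≤ m}, where e_j' = e_{j,1} e_{j,3} ⋯ e_{j,2p_j+1} and e_i'' = e_{i,2} e_{i,4} ⋯ e_{i,2p_i} are squarefree monomials in pairwise disjoint variables. Then J_{m-1} ∩ e_m' (e_1'',...,e_{m-1}'') = e_m' J_{m-1}. -/
open MvPolynomial

/-- The edge index type of the bouquet graph `A_{p₁,…,p_m}`: `⟨i, j⟩` is the edge
`e_{i,j+1}` of the `i`-th odd cycle (of length `2pᵢ+1`). -/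
abbrev bouquetEdge (m : ℕ) (p : Fin m → ℕ) : Type :=
  Σ i : Fin m, Fin (2 * p i + 1)

/-- `e'ᵢ = e_{i,1} e_{i,3} ⋯ e_{i,2pᵢ+1}`, the product of the odd-indexed edge
variables of the `i`-th cycle, in `K[E(A)]`. -/
noncomputable def eOdd (m : ℕ) (p : Fin m → ℕ) (K : Type*) [CommRing K] (i : Fin m) :
    MvPolynomial (bouquetEdge m p) K :=
  ∏ j : Fin (p i + 1), X ⟨i, ⟨2 * (j : ℕ), by have := j.isLt; omega⟩⟩

/-- `e''ᵢ = e_{i,2} e_{i,4} ⋯ e_{i,2pᵢ}`, the product of the even-indexed edge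
variables of the `i`-th cycle, in `K[E(A)]`. -/
noncomputable def eEven (m : ℕ) (p : Fin m → ℕ) (K : Type*) [CommRing K] (i : Fin m) :
    MvPolynomial (bouquetEdge m p) K :=
  ∏ j : Fin (p i), X ⟨i, ⟨2 * (j : ℕ) + 1, by have := j.isLt; omega⟩⟩

/-- `J_{m-1}`: the monomial ideal generated by `e''ᵢ e'ⱼ` for `1 ≤ i < j ≤ m−1`. -/
noncomputable def Jprev (m : ℕ) (p : Fin m → ℕ) (K : Type*) [CommRing K] :
    Ideal (MvPolynomial (bouquetEdge m p) K) :=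
  Ideal.span {f | ∃ i j : Fin m, (i : ℕ) < (j : ℕ) ∧ (j : ℕ) + 1 < m ∧
    f = eEven m p K i * eOdd m p K j}

/-- `H_m = (e''₁, …, e''_{m-1})`. -/
noncomputable def Hm (m : ℕ) (p : Fin m → ℕ) (K : Type*) [CommRing K] :
    Ideal (MvPolynomial (bouquetEdge m p) K) :=
  Ideal.span {f | ∃ i : Fin m, (i : ℕ) + 1 < m ∧ f = eEven m p K i}

/-!
All ideals involved are monomial ideals, and `e'_m` only involves variables of the `m`-th cycle,
which no generator `e''ᵢ e'ⱼ` (`i < j < m`) of `J_{m-1}` does. Hence a monomial in `J_{m-1}`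
divisible by `e'_m` is divisible by the least common multiple of `e'_m` and some generator, which
is their product: `J_{m-1} ∩ (e'_m) = e'_m J_{m-1}`. The theorem follows since
`e'_m H_m ⊆ (e'_m)` and `J_{m-1} ⊆ H_m`.
-/

namespace MvPolynomial

variable {σ R : Type*} [CommSemiring R]

theorem exists_prod_X_eq_monomial {ι : Type*} (s : Finset ι) (f : ι → σ) :
    ∃ d : σ →₀ ℕ, ∏ j ∈ s, (X (f j) : MvPolynomial σ R) = monomial d 1 ∧
      ∀ x ∈ d.support, ∃ j ∈ s, f j = x := by
  classical
  refine ⟨∑ j ∈ s, Finsupp.single (f j) 1, by simp only [monomial_sum_one, X], fun x hx => ?_⟩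
  obtain ⟨j, hj, hx⟩ := Finset.mem_biUnion.1 (Finsupp.support_finsetSum hx)
  exact ⟨j, hj, (Finset.mem_singleton.1 (Finsupp.support_single_subset hx)).symm⟩

theorem span_inf_span_singleton_monomial_le {G : Set (MvPolynomial σ R)} {u : σ →₀ ℕ}
    (hG : ∀ g ∈ G, ∃ s : σ →₀ ℕ, g = monomial s 1 ∧ Disjoint s.support u.support) :
    Ideal.span G ⊓ Ideal.span {monomial u 1} ≤
      Ideal.span {monomial u 1} * Ideal.span G := by
  classical
  set S : Set (σ →₀ ℕ) := {s | monomial s 1 ∈ G ∧ Disjoint s.support u.support}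
  have hGS : G = (fun s => monomial s (1 : R)) '' S := by
    ext g
    constructor
    · intro hg
      obtain ⟨s, rfl, hs⟩ := hG g hg
      exact ⟨s, ⟨hg, hs⟩, rfl⟩
    · rintro ⟨s, ⟨hs, -⟩, rfl⟩
      exact hs
  have hshift : Ideal.span ((fun s => monomial (u + s) (1 : R)) '' S) ≤
      Ideal.span {monomial u 1} * Ideal.span G := by
    rw [Ideal.span_le]
    rintro _ ⟨s, ⟨hs, -⟩, rfl⟩
    have hmul : monomial (u + s) (1 : R) = monomial u 1 * monomial s 1 := by
      rw [monomial_mul, one_mul]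
    show monomial (u + s) (1 : R) ∈ _
    rw [hmul]
    exact Ideal.mul_mem_mul (Ideal.mem_span_singleton_self _) (Ideal.subset_span hs)
  intro f hf
  obtain ⟨hfG, hfu⟩ := Ideal.mem_inf.1 hf
  rw [hGS, mem_ideal_span_monomial_image] at hfG
  replace hfu : f ∈ Ideal.span ((fun s => monomial s (1 : R)) '' {u}) := by
    rwa [Set.image_singleton]
  rw [mem_ideal_span_monomial_image] at hfu
  refine hshift ?_
  rw [← Set.image_image (g := fun s => monomial s (1 : R)), mem_ideal_span_monomial_image]
  intro xi hxi
  obtain ⟨s, hs, hsx⟩ := hfG xi hxi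
  obtain ⟨_, hu, hux⟩ := hfu xi hxi
  rw [Set.mem_singleton_iff.1 hu] at hux
  refine ⟨u + s, ⟨s, hs, rfl⟩, fun x => ?_⟩
  have hdisj : s x = 0 ∨ u x = 0 := by
    by_contra! h
    exact Finset.disjoint_left.1 hs.2 (Finsupp.mem_support_iff.2 h.1) (Finsupp.mem_support_iff.2 h.2)
  have hs_le := hsx x
  have hu_le := hux x
  rw [Finsupp.add_apply]
  omega

end MvPolynomial

section Bouquet

variable (m : ℕ) (p : Fin m → ℕ) (K : Type*) [CommRing K]

theorem eOdd_eq_monomial (i : Fin m) :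
    ∃ d, eOdd m p K i = monomial d 1 ∧ ∀ x ∈ d.support, x.1 = i := by
  obtain ⟨d, hd, hsupp⟩ := exists_prod_X_eq_monomial (R := K) Finset.univ
    fun j : Fin (p i + 1) => (⟨i, ⟨2 * (j : ℕ), by omega⟩⟩ : bouquetEdge m p)
  refine ⟨d, hd, fun x hx => ?_⟩
  obtain ⟨j, -, rfl⟩ := hsupp x hx
  rfl

theorem eEven_eq_monomial (i : Fin m) :
    ∃ d, eEven m p K i = monomial d 1 ∧ ∀ x ∈ d.support, x.1 = i := by
  obtain ⟨d, hd, hsupp⟩ := exists_prod_X_eq_monomial (R := K) Finset.univ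
    fun j : Fin (p i) => (⟨i, ⟨2 * (j : ℕ) + 1, by omega⟩⟩ : bouquetEdge m p)
  refine ⟨d, hd, fun x hx => ?_⟩
  obtain ⟨j, -, rfl⟩ := hsupp x hx
  rfl

theorem eEven_mul_eOdd_eq_monomial (i j : Fin m) :
    ∃ d, eEven m p K i * eOdd m p K j = monomial d 1 ∧
      ∀ x ∈ d.support, x.1 = i ∨ x.1 = j := by
  classical
  obtain ⟨d, hd, hdi⟩ := eEven_eq_monomial m p K i
  obtain ⟨e, he, hej⟩ := eOdd_eq_monomial m p K j
  refine ⟨d + e, by rw [hd, he, monomial_mul, one_mul], fun x hx => ?_⟩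
  rcases Finset.mem_union.1 (Finsupp.support_add hx) with hx | hx
  · exact .inl (hdi x hx)
  · exact .inr (hej x hx)

theorem Jprev_le_Hm : Jprev m p K ≤ Hm m p K := by
  rw [Jprev, Ideal.span_le]
  rintro _ ⟨i, j, hij, hj, rfl⟩
  exact Ideal.mul_mem_right _ _ (Ideal.subset_span ⟨i, by omega, rfl⟩)

end Bouquet

/-- `J_{m−1} ∩ e'_m (e''₁,…,e''_{m−1}) = e'_m J_{m−1}`. -/
theorem stmt11 (m : ℕ) (p : Fin m → ℕ) (K : Type*) [Field K]
    (hm : 2 ≤ m) :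
    Jprev m p K ⊓
        (Ideal.span {eOdd m p K ⟨m - 1, by omega⟩} * Hm m p K) =
      Ideal.span {eOdd m p K ⟨m - 1, by omega⟩} * Jprev m p K := by
  obtain ⟨u, hu, hu_last⟩ := eOdd_eq_monomial m p K ⟨m - 1, by omega⟩
  rw [hu]
  refine le_antisymm ?_ (le_inf Ideal.mul_le_right (Ideal.mul_mono_right (Jprev_le_Hm m p K)))
  refine (inf_le_inf_left _ Ideal.mul_le_left).trans ?_
  rw [Jprev]
  refine MvPolynomial.span_inf_span_singleton_monomial_le ?_
  rintro _ ⟨i, j, hij, hj, rfl⟩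
  obtain ⟨s, hs, hs_ij⟩ := eEven_mul_eOdd_eq_monomial m p K i j
  refine ⟨s, hs, Finset.disjoint_left.2 fun x hxs hxu => ?_⟩
  have hx_last : (x.1 : ℕ) = m - 1 := by rw [hu_last x hxu]
  rcases hs_ij x hxs with h | h <;> rw [h] at hx_last <;> omega
end

section
/- Let B be the compact graph of type 2 obtained from two vertex-disjoint type-1 graphs A_{p_1,...,p_m} and A_{q_1,...,q_n} with big vertices u and v, by adding the edge {u,v} and additionally a path of even length s > 0 from u to v through new vertices w_1,...,w_{s−1}. Then the matching number of B equals Σp_i + Σq_i + s/2. -/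
/-- Vertex set of the type-2 compact graph `B^s`: `Sum.inl true` is the big vertex `u`,
`Sum.inl false` is the big vertex `v`, `inr (inl ⟨i,j⟩)` is `u_{i,j+1}`,
`inr (inr (inl ⟨i,j⟩))` is `v_{i,j+1}`, and `inr (inr (inr t))` is the path vertex
`w_{t+1}`. -/
abbrev BVert (m n s : ℕ) (p : Fin m → ℕ) (q : Fin n → ℕ) : Type :=
  Bool ⊕ ((Σ i : Fin m, Fin (2 * p i)) ⊕ ((Σ i : Fin n, Fin (2 * q i)) ⊕ Fin (s - 1)))

/-- The base edge relation of `B^s_{p:q}`: the edge `{u,v}`, the odd cycles of lengths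
`2pᵢ+1` through `u`, the odd cycles of lengths `2qᵢ+1` through `v`, and the path
`u - w₁ - ⋯ - w_{s-1} - v` of length `s`. -/
def BRel (m n s : ℕ) (p : Fin m → ℕ) (q : Fin n → ℕ) :
    BVert m n s p q → BVert m n s p q → Prop
  | .inl a, .inl b => a ≠ b
  | .inl true, .inr (.inl ⟨i, j⟩) => (j : ℕ) = 0 ∨ (j : ℕ) + 1 = 2 * p i
  | .inl false, .inr (.inr (.inl ⟨i, j⟩)) => (j : ℕ) = 0 ∨ (j : ℕ) + 1 = 2 * q i
  | .inl true, .inr (.inr (.inr t)) => (t : ℕ) = 0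
  | .inl false, .inr (.inr (.inr t)) => (t : ℕ) + 2 = s
  | .inr (.inl ⟨i, j⟩), .inr (.inl ⟨i', j'⟩) => (i : ℕ) = (i' : ℕ) ∧ (j' : ℕ) = (j : ℕ) + 1
  | .inr (.inr (.inl ⟨i, j⟩)), .inr (.inr (.inl ⟨i', j'⟩)) =>
      (i : ℕ) = (i' : ℕ) ∧ (j' : ℕ) = (j : ℕ) + 1
  | .inr (.inr (.inr t)), .inr (.inr (.inr t')) => (t' : ℕ) = (t : ℕ) + 1
  | _, _ => False

/-- The compact graph `B^s_{p₁,…,p_m : q₁,…,q_n}` of type 2. -/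
def BGraph (m n s : ℕ) (p : Fin m → ℕ) (q : Fin n → ℕ) :
    SimpleGraph (BVert m n s p q) :=
  SimpleGraph.fromRel (BRel m n s p q)

/-- `M` is a matching of `G`: a finite set of pairwise disjoint edges. -/
def IsMatchingSet {V : Type*} (G : SimpleGraph V) (M : Finset (Sym2 V)) : Prop :=
  (∀ e ∈ M, e ∈ G.edgeSet) ∧
    (M : Set (Sym2 V)).Pairwise fun e f => ∀ v : V, v ∈ e → v ∉ f

section Aux

variable {V : Type*} [DecidableEq V]

/-- The finset of vertices of an unordered pair. -/
def eFinset (e : Sym2 V) : Finset V :=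
  Sym2.lift ⟨fun a b => {a, b}, fun a b => Finset.pair_comm a b⟩ e

@[simp] lemma mem_eFinset {v : V} {e : Sym2 V} : v ∈ eFinset e ↔ v ∈ e := by
  induction e using Sym2.ind with
  | _ a b => simp [eFinset, Sym2.mem_iff]

lemma card_eFinset {e : Sym2 V} (h : ¬ e.IsDiag) : (eFinset e).card = 2 := by
  induction e using Sym2.ind with
  | _ a b =>
    have : a ≠ b := by simpa using h
    simp [eFinset, Finset.card_pair this]

lemma sym2_exists_mem (e : Sym2 V) : ∃ v, v ∈ e := by
  induction e using Sym2.ind with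
  | _ a b => exact ⟨a, Sym2.mem_mk_left a b⟩

lemma matching_card_bound {V : Type*} [Fintype V] [DecidableEq V] (G : SimpleGraph V)
    (M : Finset (Sym2 V)) (h : IsMatchingSet G M) : 2 * M.card ≤ Fintype.card V := by
  have hd : ∀ x ∈ M, ∀ y ∈ M, x ≠ y → Disjoint (eFinset x) (eFinset y) := by
    intro x hx y hy hxy
    rw [Finset.disjoint_left]
    intro v hvx hvy
    exact h.2 hx hy hxy v (by simpa using hvx) (by simpa using hvy)
  have hcard := Finset.card_biUnion hd
  have hsum : ∑ e ∈ M, (eFinset e).card = 2 * M.card := by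
    rw [Finset.sum_congr rfl fun e he => card_eFinset (G.not_isDiag_of_mem_edgeSet (h.1 e he))]
    simp [mul_comm]
  calc 2 * M.card = (M.biUnion eFinset).card := by rw [hcard, hsum]
    _ ≤ Fintype.card V := Finset.card_le_univ _

lemma sigma_fin_eq_iff {m : ℕ} {f : Fin m → ℕ} {i i' : Fin m} {j : Fin (f i)} {j' : Fin (f i')} :
    (⟨i, j⟩ : Σ i, Fin (f i)) = ⟨i', j'⟩ ↔ i = i' ∧ (j : ℕ) = (j' : ℕ) := by
  constructor
  · intro h
    injection h with h1 h2
    subst h1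
    rw [heq_iff_eq] at h2
    exact ⟨rfl, by rw [h2]⟩
  · rintro ⟨rfl, h⟩
    exact congrArg _ (Fin.ext h)

end Aux

variable (m n s : ℕ) (p : Fin m → ℕ) (q : Fin n → ℕ)

/-- The edges of the maximum matching of `B^s_{p:q}`. -/
def mEdge (h2 : 2 ≤ s) (he : s % 2 = 0) :
    ((Σ i : Fin m, Fin (p i)) ⊕ ((Σ i : Fin n, Fin (q i)) ⊕ Fin (s / 2))) →
    Sym2 (BVert m n s p q)
  | .inl ⟨i, k⟩ => s(.inr (.inl ⟨i, ⟨2*k, by have := k.isLt; omega⟩⟩),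
      .inr (.inl ⟨i, ⟨2*k+1, by have := k.isLt; omega⟩⟩))
  | .inr (.inl ⟨i, k⟩) => s(.inr (.inr (.inl ⟨i, ⟨2*k, by have := k.isLt; omega⟩⟩)),
      .inr (.inr (.inl ⟨i, ⟨2*k+1, by have := k.isLt; omega⟩⟩)))
  | .inr (.inr k) =>
    if h : (k : ℕ) = 0 then s(.inl true, .inr (.inr (.inr ⟨0, by omega⟩)))
    else s(.inr (.inr (.inr ⟨2*(k:ℕ)-1, by have := k.isLt; omega⟩)),
        .inr (.inr (.inr ⟨2*(k:ℕ), by have := k.isLt; omega⟩)))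

lemma mEdge_shared (h2 : 2 ≤ s) (he : s % 2 = 0) (x y) (v)
    (hx : v ∈ mEdge m n s p q h2 he x) (hy : v ∈ mEdge m n s p q h2 he y) : x = y := by
  rcases x with ⟨i, k⟩ | ⟨i, k⟩ | k <;> rcases y with ⟨i', k'⟩ | ⟨i', k'⟩ | k' <;>
    rcases v with b | ⟨i0, j0⟩ | ⟨i0, j0⟩ | t0 <;>
    simp only [mEdge] at hx hy <;>
    (try split_ifs at hx hy) <;>
    simp_all [Sym2.mem_iff, sigma_fin_eq_iff, Fin.ext_iff] <;>
    (try omega)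
  all_goals (
    obtain ⟨h1, h2⟩ | ⟨h1, h2⟩ := hx <;> obtain ⟨h3, h4⟩ | ⟨h3, h4⟩ := hy <;>
    ( obtain rfl : i0 = i := Fin.ext h1
      obtain rfl : i0 = i' := Fin.ext h3
      simp [heq_iff_eq, Fin.ext_iff] at h2 h4
      exact ⟨rfl, heq_of_eq (Fin.ext (by omega))⟩ ))

instance : DecidableEq (Sym2 (BVert m n s p q)) := Sym2.instDecidableEq

lemma mEdge_mem (h2 : 2 ≤ s) (he : s % 2 = 0) (x) :
    mEdge m n s p q h2 he x ∈ (BGraph m n s p q).edgeSet := by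
  rcases x with ⟨i, k⟩ | ⟨i, k⟩ | k <;>
    simp only [mEdge] <;>
    (try split_ifs with h) <;>
    rw [SimpleGraph.mem_edgeSet] <;>
    simp [BGraph, SimpleGraph.fromRel_adj, BRel, sigma_fin_eq_iff, Fin.ext_iff] <;>
    omega

/-- The matching number of the type-2 compact graph `B^s_{p:q}` (with `s > 0` even) is
`∑ pᵢ + ∑ qᵢ + s/2`. -/
theorem stmt16 (m n s : ℕ) (p : Fin m → ℕ) (q : Fin n → ℕ)
    (hm : 0 < m) (hn : 0 < n) (hp : ∀ i, 0 < p i) (hq : ∀ i, 0 < q i)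
    (hs : 0 < s) (hseven : Even s) :
    IsGreatest {N : ℕ | ∃ M : Finset (Sym2 (BVert m n s p q)),
      IsMatchingSet (BGraph m n s p q) M ∧ M.card = N}
      (∑ i, p i + ∑ i, q i + s / 2) := by
  obtain ⟨t, hts⟩ := hseven
  have h2 : 2 ≤ s := by omega
  have he : s % 2 = 0 := by omega
  constructor
  · -- the explicit matching
    refine ⟨Finset.image (mEdge m n s p q h2 he) Finset.univ, ⟨?_, ?_⟩, ?_⟩
    · intro e heM
      simp only [Finset.mem_image, Finset.mem_univ, true_and] at heM
      obtain ⟨x, rfl⟩ := heM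
      exact mEdge_mem m n s p q h2 he x
    · intro e heM f hfM hef v hv hvf
      simp only [Finset.coe_image, Set.mem_image, Finset.mem_coe, Finset.mem_univ,
        Set.mem_setOf_eq] at heM hfM
      obtain ⟨x, -, rfl⟩ := heM
      obtain ⟨y, -, rfl⟩ := hfM
      exact hef (congrArg _ (mEdge_shared m n s p q h2 he x y v hv hvf))
    · have hinj : Function.Injective (mEdge m n s p q h2 he) := by
        intro x y hxy
        obtain ⟨v, hv⟩ := sym2_exists_mem (mEdge m n s p q h2 he x)
        exact mEdge_shared m n s p q h2 he x y v hv (hxy ▸ hv)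
      rw [Finset.card_image_of_injective _ hinj, Finset.card_univ]
      simp only [Fintype.card_sum, Fintype.card_sigma, Fintype.card_fin]
      omega
  · -- upper bound
    rintro N ⟨M, hM, rfl⟩
    have hb := matching_card_bound (BGraph m n s p q) M hM
    have hcard : Fintype.card (BVert m n s p q) =
        2 + ((∑ i, 2 * p i) + ((∑ i, 2 * q i) + (s - 1))) := by
      simp [Fintype.card_sum, Fintype.card_sigma, Fintype.card_fin]
    rw [hcard] at hb
    have hp2 : ∑ i, 2 * p i = 2 * ∑ i, p i := by rw [Finset.mul_sum]
    have hq2 : ∑ i, 2 * q i = 2 * ∑ i, q i := by rw [Finset.mul_sum]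
    omega
end
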